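/- arXiv:2111.11577 — 3 statements merged into one kernel-verified Lean document; each statement's English description precedes it below -/
import Mathlib

section
/- Füredi–Gyárfás theorem: every linear 3-uniform hypergraph on n vertices that contains no subgraph copy of the 3-fan F has at most n²/9 edges. -/
open Filter

namespace Paper

variable {V W : Type*} [DecidableEq V] [DecidableEq W]

/-- `E` is (the edge family of) a linear 3-uniform hypergraph: every edge has 3 vertices and
two distinct edges meet in at most one vertex. -/
def Linear3 (E : Set (Finset V)) : Prop :=
  (∀ e ∈ E, e.card = 3) ∧ ∀ e ∈ E, ∀ f ∈ E, e ≠ f → (e ∩ f).card ≤ 1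

/-- A Ruzsa–Szemerédi hypergraph: a linear 3-uniform hypergraph in which every 6 vertices
span at most 2 edges. -/
def IsRS (E : Set (Finset V)) : Prop :=
  Linear3 E ∧ ∀ S : Finset V, S.card = 6 → {e ∈ E | e ⊆ S}.ncard ≤ 2

/-- `E` contains a linear 3-cycle: edges `{a,b,c}, {c,d,e}, {e,f,a}` on six distinct
vertices. -/
def HasLinear3Cycle (E : Set (Finset V)) : Prop :=
  ∃ a b c d e f : V, ({a, b, c, d, e, f} : Finset V).card = 6 ∧
    ({a, b, c} : Finset V) ∈ E ∧ ({c, d, e} : Finset V) ∈ E ∧ ({e, f, a} : Finset V) ∈ E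

/-- `E` contains a subgraph copy of the hypergraph with edge family `G`. -/
def HasCopy (G : Set (Finset W)) (E : Set (Finset V)) : Prop :=
  ∃ φ : W → V, Function.Injective φ ∧ ∀ e ∈ G, e.image φ ∈ E

/-- `E` contains an induced copy of the hypergraph with edge family `G`. -/
def HasInducedCopy (G : Set (Finset W)) (E : Set (Finset V)) : Prop :=
  ∃ φ : W → V, Function.Injective φ ∧ (∀ e ∈ G, e.image φ ∈ E) ∧
    ∀ f ∈ E, (f : Set V) ⊆ Set.range φ → ∃ e ∈ G, f = e.image φ

/-- The linear 3-cycle `𝒲³` (as a 3-uniform hypergraph on six vertices). -/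
def cycleHG : Set (Finset (Fin 6)) := {{0, 1, 2}, {2, 3, 4}, {4, 5, 0}}

/-- The Fano hypergraph `F₇`. -/
def fanoHG : Set (Finset (Fin 7)) :=
  {{0, 1, 2}, {0, 3, 4}, {0, 5, 6}, {1, 3, 5}, {1, 4, 6}, {2, 3, 6}, {2, 4, 5}}

/-- The 3-fan (sail) `F`. -/
def fanHG : Set (Finset (Fin 7)) := {{0, 1, 2}, {0, 3, 4}, {0, 5, 6}, {2, 4, 6}}

end Paper

namespace Paper

set_option linter.unusedSectionVars false

variable {V : Type*} [DecidableEq V]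

lemma pair_card_two {x v : V} (h : v ≠ x) : ({v, x} : Finset V).card = 2 := by
  rw [Finset.card_insert_of_notMem (by simp [h]), Finset.card_singleton]
lemma star_inter {E : Set (Finset V)} (hlin : Linear3 E) {x : V} {f g : Finset V}
    (hf : f ∈ E) (hg : g ∈ E) (hxf : x ∈ f) (hxg : x ∈ g) (hfg : f ≠ g)
    {v : V} (hvf : v ∈ f) (hvg : v ∈ g) : v = x := by
  by_contra hvx
  have h2 : ({v, x} : Finset V) ⊆ f ∩ g := by
    intro a ha
    simp only [Finset.mem_insert, Finset.mem_singleton] at ha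
    rcases ha with rfl | rfl <;> simp [Finset.mem_inter, hvf, hvg, hxf, hxg]
  have h1 := hlin.2 f hf g hg hfg
  have := Finset.card_le_card h2
  rw [pair_card_two hvx] at this
  omega
lemma third_elem {f : Finset V} (hf : f.card = 3) {x u : V} (hx : x ∈ f) (hu : u ∈ f)
    (hxu : x ≠ u) : ∃ u', u' ∈ f ∧ u' ≠ x ∧ u' ≠ u ∧ f = {x, u, u'} := by
  have hsub : ({x, u} : Finset V) ⊆ f := by
    intro a ha
    simp only [Finset.mem_insert, Finset.mem_singleton] at ha
    rcases ha with rfl | rfl <;> assumption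
  have hne : (f \ {x, u}).Nonempty := by
    rw [← Finset.card_pos, Finset.card_sdiff_of_subset hsub, hf, pair_card_two hxu]
    · norm_num
  obtain ⟨u', hu'⟩ := hne
  simp only [Finset.mem_sdiff, Finset.mem_insert, Finset.mem_singleton, not_or] at hu'
  refine ⟨u', hu'.1, hu'.2.1, hu'.2.2, ?_⟩
  refine (Finset.eq_of_subset_of_card_le ?_ ?_).symm
  · intro a ha
    simp only [Finset.mem_insert, Finset.mem_singleton] at ha
    rcases ha with rfl | rfl | rfl
    · exact hx
    · exact hu
    · exact hu'.1
  · rw [hf]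
    rw [Finset.card_insert_of_notMem (by simp [hxu, Ne.symm hu'.2.1]),
      Finset.card_insert_of_notMem (by simp [Ne.symm hu'.2.2]), Finset.card_singleton]

lemma inj7 {a0 a1 a2 a3 a4 a5 a6 : V} (h01 : a0 ≠ a1) (h02 : a0 ≠ a2) (h03 : a0 ≠ a3)
    (h04 : a0 ≠ a4) (h05 : a0 ≠ a5) (h06 : a0 ≠ a6) (h12 : a1 ≠ a2) (h13 : a1 ≠ a3)
    (h14 : a1 ≠ a4) (h15 : a1 ≠ a5) (h16 : a1 ≠ a6) (h23 : a2 ≠ a3) (h24 : a2 ≠ a4)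
    (h25 : a2 ≠ a5) (h26 : a2 ≠ a6) (h34 : a3 ≠ a4) (h35 : a3 ≠ a5) (h36 : a3 ≠ a6)
    (h45 : a4 ≠ a5) (h46 : a4 ≠ a6) (h56 : a5 ≠ a6) :
    Function.Injective ![a0, a1, a2, a3, a4, a5, a6] := by
  have e5 : ![a0, a1, a2, a3, a4, a5, a6] (5:Fin 7) = a5 := rfl
  have e6 : ![a0, a1, a2, a3, a4, a5, a6] (6:Fin 7) = a6 := rfl
  intro i j hij
  fin_cases i <;> fin_cases j <;> simp_all

lemma fan_of_three {E : Set (Finset V)} (hlin : Linear3 E)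
    {x : V} {e : Finset V} (he : e ∈ E) (hxe : x ∉ e)
    {u v w : V} (heq : e = {u, v, w}) (huv : u ≠ v) (huw : u ≠ w) (hvw : v ≠ w)
    {fu fv fw : Finset V} (hfu : fu ∈ E) (hfv : fv ∈ E) (hfw : fw ∈ E)
    (hxfu : x ∈ fu) (hxfv : x ∈ fv) (hxfw : x ∈ fw)
    (hufu : u ∈ fu) (hvfv : v ∈ fv) (hwfw : w ∈ fw) : HasCopy fanHG E := by
  have hue : u ∈ e := by simp [heq]
  have hve : v ∈ e := by simp [heq]
  have hwe : w ∈ e := by simp [heq]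
  have hxu : x ≠ u := fun h => hxe (h ▸ hue)
  have hxv : x ≠ v := fun h => hxe (h ▸ hve)
  have hxw : x ≠ w := fun h => hxe (h ▸ hwe)
  have hdist : ∀ {f g : Finset V} {a b : V}, f ∈ E → g ∈ E → x ∈ f → x ∈ g →
      a ∈ f → b ∈ g → a ∈ e → b ∈ e → a ≠ b → f ≠ g := by
    rintro f g a b hf hg hxf hxg haf hbg hae hbe hab rfl
    have hne : e ≠ f := fun h => hxe (h ▸ hxf)
    have h2 : ({a, b} : Finset V) ⊆ e ∩ f := by
      intro c hc
      simp only [Finset.mem_insert, Finset.mem_singleton] at hc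
      rcases hc with rfl | rfl
      · exact Finset.mem_inter.mpr ⟨hae, haf⟩
      · exact Finset.mem_inter.mpr ⟨hbe, hbg⟩
    have := Finset.card_le_card h2
    rw [pair_card_two hab] at this
    have h1 := hlin.2 e he f hf hne
    omega
  have hfufv : fu ≠ fv := hdist hfu hfv hxfu hxfv hufu hvfv hue hve huv
  have hfufw : fu ≠ fw := hdist hfu hfw hxfu hxfw hufu hwfw hue hwe huw
  have hfvfw : fv ≠ fw := hdist hfv hfw hxfv hxfw hvfv hwfw hve hwe hvw
  obtain ⟨u', hu'f, hu'x, hu'u, hfueq⟩ := third_elem (hlin.1 fu hfu) hxfu hufu hxu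
  obtain ⟨v', hv'f, hv'x, hv'v, hfveq⟩ := third_elem (hlin.1 fv hfv) hxfv hvfv hxv
  obtain ⟨w', hw'f, hw'x, hw'w, hfweq⟩ := third_elem (hlin.1 fw hfw) hxfw hwfw hxw
  have cuv : ∀ {a : V}, a ∈ fu → a ∈ fv → a = x := fun ha hb =>
    star_inter hlin hfu hfv hxfu hxfv hfufv ha hb
  have cuw : ∀ {a : V}, a ∈ fu → a ∈ fw → a = x := fun ha hb =>
    star_inter hlin hfu hfw hxfu hxfw hfufw ha hb
  have cvw : ∀ {a : V}, a ∈ fv → a ∈ fw → a = x := fun ha hb =>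
    star_inter hlin hfv hfw hxfv hxfw hfvfw ha hb
  have d1 : u' ≠ v' := fun h => hu'x (cuv hu'f (by rw [h]; exact hv'f))
  have d2 : u' ≠ v := fun h => hu'x (cuv hu'f (by rw [h]; exact hvfv))
  have d3 : u ≠ v' := fun h => hxu (cuv hufu (by rw [h]; exact hv'f)).symm
  have d4 : u' ≠ w' := fun h => hu'x (cuw hu'f (by rw [h]; exact hw'f))
  have d5 : u' ≠ w := fun h => hu'x (cuw hu'f (by rw [h]; exact hwfw))
  have d6 : u ≠ w' := fun h => hxu (cuw hufu (by rw [h]; exact hw'f)).symm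
  have d7 : v' ≠ w' := fun h => hv'x (cvw hv'f (by rw [h]; exact hw'f))
  have d8 : v' ≠ w := fun h => hv'x (cvw hv'f (by rw [h]; exact hwfw))
  have d9 : v ≠ w' := fun h => hxv (cvw hvfv (by rw [h]; exact hw'f)).symm
  have e5 : ∀ a0 a1 a2 a3 a4 a5 a6 : V, ![a0,a1,a2,a3,a4,a5,a6] (5:Fin 7) = a5 :=
    fun _ _ _ _ _ _ _ => rfl
  have e6 : ∀ a0 a1 a2 a3 a4 a5 a6 : V, ![a0,a1,a2,a3,a4,a5,a6] (6:Fin 7) = a6 :=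
    fun _ _ _ _ _ _ _ => rfl
  refine ⟨![x, u', u, v', v, w', w], ?_, ?_⟩
  · exact inj7 hu'x.symm hxu (Ne.symm hv'x) hxv (Ne.symm hw'x) hxw hu'u d1 d2 d4 d5 d3 huv d6
      huw (Ne.symm hv'v).symm d7 d8 d9 hvw (Ne.symm hw'w).symm
  · intro e0 he0
    simp only [fanHG, Set.mem_insert_iff, Set.mem_singleton_iff] at he0
    rcases he0 with rfl | rfl | rfl | rfl
    · have : ({0, 1, 2} : Finset (Fin 7)).image ![x, u', u, v', v, w', w] = fu := by
        simp [Finset.image_insert, Finset.image_singleton, e5, e6]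
        rw [hfueq, Finset.pair_comm u' u]
      rw [this]; exact hfu
    · have : ({0, 3, 4} : Finset (Fin 7)).image ![x, u', u, v', v, w', w] = fv := by
        simp [Finset.image_insert, Finset.image_singleton, e5, e6]
        rw [hfveq, Finset.pair_comm v' v]
      rw [this]; exact hfv
    · have : ({0, 5, 6} : Finset (Fin 7)).image ![x, u', u, v', v, w', w] = fw := by
        simp [Finset.image_insert, Finset.image_singleton, e5, e6]
        rw [hfweq, Finset.pair_comm w' w]
      rw [this]; exact hfw
    · have : ({2, 4, 6} : Finset (Fin 7)).image ![x, u', u, v', v, w', w] = e := by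
        simp [Finset.image_insert, Finset.image_singleton, e5, e6]
        rw [heq]
      rw [this]; exact he

/-- **Füredi–Gyárfás.** A linear 3-uniform hypergraph on `n` vertices with no subgraph copy of
the 3-fan `F` has at most `n²/9` edges. -/
theorem furedi_gyarfas (n : ℕ) (E : Finset (Finset (Fin n)))
    (hlin : Linear3 (E : Set (Finset (Fin n))))
    (hfan : ¬ HasCopy fanHG (E : Set (Finset (Fin n)))) :
    (E.card : ℝ) ≤ (n : ℝ) ^ 2 / 9 := by
  classical
  rcases E.eq_empty_or_nonempty with rfl | hE
  · simp; positivity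
  have h3 : ∀ e ∈ E, e.card = 3 := fun e he => hlin.1 e (Finset.mem_coe.mpr he)
  obtain ⟨e0, he0⟩ := hE
  obtain ⟨x0, -⟩ : e0.Nonempty := Finset.card_pos.mp (by rw [h3 e0 he0]; norm_num)
  set deg : Fin n → ℕ := fun v => (E.filter (fun e => v ∈ e)).card with hdeg
  obtain ⟨x, -, hx⟩ := Finset.exists_max_image Finset.univ deg ⟨x0, Finset.mem_univ x0⟩
  set d := deg x with hd
  have hxmax : ∀ v : Fin n, deg v ≤ d := fun v => hx v (Finset.mem_univ v)
  set Ex := E.filter (fun e => x ∈ e) with hEx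
  have hExd : Ex.card = d := rfl
  set S := Ex.biUnion (fun e => e.erase x) with hS
  have hdisj : ∀ f ∈ Ex, ∀ g ∈ Ex, f ≠ g → Disjoint (f.erase x) (g.erase x) := by
    intro f hf g hg hfg
    rw [hEx, Finset.mem_filter] at hf hg
    rw [Finset.disjoint_left]
    intro a haf hag
    rw [Finset.mem_erase] at haf hag
    exact haf.1 (star_inter hlin (Finset.mem_coe.mpr hf.1) (Finset.mem_coe.mpr hg.1)
      hf.2 hg.2 hfg haf.2 hag.2)
  have hScard : S.card = 2 * d := by
    have h2 : ∀ e ∈ Ex, (e.erase x).card = 2 := by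
      intro e he
      rw [hEx, Finset.mem_filter] at he
      rw [Finset.card_erase_of_mem he.2, h3 e he.1]
    rw [hS, Finset.card_biUnion hdisj, Finset.sum_congr rfl h2, Finset.sum_const,
      smul_eq_mul, hExd, mul_comm]
  have hxS : x ∉ S := by
    intro hx'
    rw [hS, Finset.mem_biUnion] at hx'
    obtain ⟨e, -, he⟩ := hx'
    exact (Finset.mem_erase.mp he).1 rfl
  -- exactly one star edge through each v ∈ S
  have hone : ∀ v ∈ S, (E.filter (fun e => v ∈ e ∧ x ∈ e)).card = 1 := by
    intro v hv
    rw [hS, Finset.mem_biUnion] at hv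
    obtain ⟨f, hf, hvf⟩ := hv
    rw [hEx, Finset.mem_filter] at hf
    rw [Finset.mem_erase] at hvf
    apply le_antisymm
    · apply Finset.card_le_one.mpr
      intro g hg g' hg'
      rw [Finset.mem_filter] at hg hg'
      by_contra hne
      exact hvf.1 (star_inter hlin (Finset.mem_coe.mpr hg.1) (Finset.mem_coe.mpr hg'.1)
        hg.2.2 hg'.2.2 hne hg.2.1 hg'.2.1)
    · rw [Nat.succ_le_iff, Finset.card_pos]
      exact ⟨f, Finset.mem_filter.mpr ⟨hf.1, hvf.2, hf.2⟩⟩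
  set E' := E.filter (fun e => x ∉ e) with hE'
  have hsplit : d + E'.card = E.card := by
    rw [← hExd, hEx, hE']
    exact Finset.card_filter_add_card_filter_not _
  -- degree decomposition on S
  have hdegv : ∀ v ∈ S, deg v = 1 + (E'.filter (fun e => v ∈ e)).card := by
    intro v hv
    have hone' := hone v hv
    have hsp := Finset.card_filter_add_card_filter_not
      (s := E.filter (fun e => v ∈ e)) (p := fun e => x ∈ e)
    rw [Finset.filter_filter, Finset.filter_filter] at hsp
    have h2 : (E'.filter (fun e => v ∈ e)).card = (E.filter (fun e => v ∈ e ∧ ¬ x ∈ e)).card := by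
      rw [hE', Finset.filter_comm, Finset.filter_filter]
    simp only [hdeg]
    omega
  -- double counting incidences with E'
  have hdouble : ∑ v ∈ S, (E'.filter (fun e => v ∈ e)).card = ∑ e ∈ E', (e ∩ S).card := by
    calc ∑ v ∈ S, (E'.filter (fun e => v ∈ e)).card
        = ∑ v ∈ S, ∑ e ∈ E', if v ∈ e then 1 else 0 := by
          refine Finset.sum_congr rfl fun v _ => Finset.card_filter _ _
      _ = ∑ e ∈ E', ∑ v ∈ S, if v ∈ e then 1 else 0 := Finset.sum_comm
      _ = ∑ e ∈ E', (e ∩ S).card := by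
          refine Finset.sum_congr rfl fun e _ => ?_
          rw [← Finset.card_filter]
          congr 1
          ext v
          simp only [Finset.mem_filter, Finset.mem_inter]
          tauto
  -- key bound : every edge avoiding x meets S in at most 2 vertices
  have hkey : ∀ e ∈ E', (e ∩ S).card ≤ 2 := by
    intro e he'
    rw [hE', Finset.mem_filter] at he'
    obtain ⟨he, hxe⟩ := he'
    by_contra hgt
    push_neg at hgt
    have hecard := h3 e he
    have heq2 : e ∩ S = e :=
      Finset.eq_of_subset_of_card_le Finset.inter_subset_left (by omega)
    have heS : e ⊆ S := by
      rw [← heq2]; exact Finset.inter_subset_right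
    obtain ⟨u, v, w, huv, huw, hvw, heq⟩ := Finset.card_eq_three.mp hecard
    have hgetf : ∀ a ∈ e, ∃ f ∈ E, x ∈ f ∧ a ∈ f := by
      intro a ha
      have h := heS ha
      rw [hS, Finset.mem_biUnion] at h
      obtain ⟨f, hf, haf⟩ := h
      rw [hEx, Finset.mem_filter] at hf
      exact ⟨f, hf.1, hf.2, (Finset.mem_erase.mp haf).2⟩
    obtain ⟨fu, hfu, hxfu, hufu⟩ := hgetf u (by rw [heq]; simp)
    obtain ⟨fv, hfv, hxfv, hvfv⟩ := hgetf v (by rw [heq]; simp)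
    obtain ⟨fw, hfw, hxfw, hwfw⟩ := hgetf w (by rw [heq]; simp)
    exact hfan (fan_of_three hlin (Finset.mem_coe.mpr he) hxe heq huv huw hvw
      (Finset.mem_coe.mpr hfu) (Finset.mem_coe.mpr hfv) (Finset.mem_coe.mpr hfw)
      hxfu hxfv hxfw hufu hvfv hwfw)
  -- total degree sum
  have hsum_all : ∑ v : Fin n, deg v = 3 * E.card := by
    calc ∑ v : Fin n, deg v
        = ∑ v : Fin n, ∑ e ∈ E, if v ∈ e then 1 else 0 := by
          refine Finset.sum_congr rfl fun v _ => Finset.card_filter _ _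
      _ = ∑ e ∈ E, ∑ v : Fin n, if v ∈ e then 1 else 0 := Finset.sum_comm
      _ = ∑ e ∈ E, e.card := by
          refine Finset.sum_congr rfl fun e _ => ?_
          rw [← Finset.card_filter]
          congr 1
          ext v
          simp
      _ = 3 * E.card := by
          rw [Finset.sum_congr rfl h3, Finset.sum_const, smul_eq_mul, mul_comm]
  -- sum over S
  have hSsum : ∑ v ∈ S, deg v ≤ 2 * d + 2 * E'.card := by
    rw [Finset.sum_congr rfl hdegv, Finset.sum_add_distrib, Finset.sum_const, smul_eq_mul,
      mul_one, hScard]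
    have hb : ∑ v ∈ S, (E'.filter (fun e => v ∈ e)).card ≤ 2 * E'.card := by
      rw [hdouble]
      calc ∑ e ∈ E', (e ∩ S).card ≤ ∑ e ∈ E', 2 := Finset.sum_le_sum hkey
        _ = 2 * E'.card := by rw [Finset.sum_const, smul_eq_mul, mul_comm]
    omega
  -- remaining vertices
  set T := insert x S with hT
  have hTcard : T.card = 2 * d + 1 := by
    rw [hT, Finset.card_insert_of_notMem hxS, hScard]
  have hRsum : ∑ v ∈ Finset.univ \ T, deg v ≤ (Finset.univ \ T).card * d := by
    have := Finset.sum_le_card_nsmul (Finset.univ \ T) deg d (fun v _ => hxmax v)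
    simpa [smul_eq_mul] using this
  have hsplit2 : ∑ v ∈ Finset.univ \ T, deg v + ∑ v ∈ T, deg v = ∑ v : Fin n, deg v :=
    Finset.sum_sdiff (Finset.subset_univ T)
  have hins : ∑ v ∈ T, deg v = d + ∑ v ∈ S, deg v := by
    rw [hT, Finset.sum_insert hxS, hd]
  set k := (Finset.univ \ T).card with hk
  have hkn : k + (2 * d + 1) = n := by
    have hle : T.card ≤ n := by
      simpa using Finset.card_le_univ T
    rw [hk, Finset.card_sdiff_of_subset (Finset.subset_univ T), hTcard]
    simp only [Finset.card_univ, Fintype.card_fin]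
    omega
  have hnd : 3 * E.card ≤ n * d :=
    calc 3 * E.card = ∑ v : Fin n, deg v := hsum_all.symm
      _ ≤ n * d := by
        have := Finset.sum_le_card_nsmul Finset.univ deg d (fun v _ => hxmax v)
        simpa [smul_eq_mul, Finset.card_univ, Fintype.card_fin] using this
  -- assemble: E.card ≤ d + k * d  (when combined); do final arithmetic over ℝ
  have hmain : 3 * E.card ≤ k * d + d + (2 * d + 2 * E'.card) := by
    have h1 : ∑ v ∈ Finset.univ \ T, deg v ≤ k * d := hRsum
    omega
  have rA : 3 * (E.card : ℝ) ≤ k * d + d + (2 * d + 2 * (E'.card : ℝ)) := by exact_mod_cast hmain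
  have rB : (d : ℝ) + E'.card = E.card := by exact_mod_cast hsplit
  have rC : (k : ℝ) + (2 * d + 1) = n := by exact_mod_cast hkn
  have rD : 3 * (E.card : ℝ) ≤ n * d := by exact_mod_cast hnd
  rw [le_div_iff₀ (by norm_num : (0:ℝ) < 9)]
  rcases le_or_gt (3 * d) n with hcase | hcase
  · have rE : 3 * (d : ℝ) ≤ n := by exact_mod_cast hcase
    nlinarith [Nat.cast_nonneg (α := ℝ) d, Nat.cast_nonneg (α := ℝ) n]
  · have rE : (n : ℝ) < 3 * d := by exact_mod_cast hcase
    nlinarith [mul_nonneg (by linarith : (0:ℝ) ≤ 3 * (d:ℝ) - n) (by linarith : (0:ℝ) ≤ 6 * (d:ℝ) - n)]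

end Paper
end

section
/- Let H be a linear 3-uniform hypergraph that contains no induced copy of the linear 3-cycle 𝒲³ and no induced copy of the Fano hypergraph F₇. Then H contains no subgraph copy of the 3-fan F. -/
open Filter

namespace Paper

set_option maxRecDepth 8000

lemma pullback {n : ℕ} {V : Type*} [DecidableEq V] {ψ : Fin n → V}
    (f : Finset V) (hf : (f : Set V) ⊆ Set.range ψ) :
    ∃ f₀ : Finset (Fin n), f = f₀.image ψ := by
  refine ⟨Finset.univ.filter (fun i => ψ i ∈ f), ?_⟩
  ext x
  simp only [Finset.mem_image, Finset.mem_filter, Finset.mem_univ, true_and]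
  constructor
  · intro hx
    obtain ⟨i, hi⟩ := hf hx
    exact ⟨i, hi ▸ hx, hi⟩
  · rintro ⟨i, hi, rfl⟩; exact hi

lemma cycle_step {V : Type*} [DecidableEq V] {E : Set (Finset V)} (hlin : Linear3 E)
    (hW : ¬ HasInducedCopy cycleHG E) {ψ : Fin 6 → V} (hinj : Function.Injective ψ)
    (he : ∀ e ∈ cycleHG, e.image ψ ∈ E) :
    ({1,3,5} : Finset (Fin 6)).image ψ ∈ E := by
  rw [HasInducedCopy] at hW
  push_neg at hW
  obtain ⟨f, hfE, hfr, hfne⟩ := hW ψ hinj he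
  obtain ⟨f₀, rfl⟩ := pullback f hfr
  have hcard : f₀.card = 3 := by
    have := hlin.1 _ hfE
    rwa [Finset.card_image_of_injective _ hinj] at this
  have key : ∀ s : Finset (Fin 6), s ∈ cycleHG → (f₀ ∩ s).card ≤ 1 := by
    intro s hs
    have := hlin.2 _ hfE _ (he s hs) (hfne s hs)
    rwa [← Finset.image_inter _ _ hinj, Finset.card_image_of_injective _ hinj] at this
  have h1 := key {0,1,2} (by simp [cycleHG])
  have h2 := key {2,3,4} (by simp [cycleHG])
  have h3 := key {4,5,0} (by simp [cycleHG])
  have hf0 : f₀ = {1,3,5} := by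
    have gen : ∀ g : Finset (Fin 6), g.card = 3 → (g ∩ {0,1,2}).card ≤ 1 →
        (g ∩ {2,3,4}).card ≤ 1 → (g ∩ {4,5,0}).card ≤ 1 → g = {1,3,5} := by decide
    exact gen f₀ hcard h1 h2 h3
  rwa [hf0] at hfE

/-- A linear 3-uniform hypergraph with no induced copy of the linear 3-cycle `𝒲³` and no
induced copy of the Fano hypergraph `F₇` contains no subgraph copy of the 3-fan `F`. -/
theorem no_induced_cycle_fano_implies_fan_free {V : Type*} [DecidableEq V]
    (E : Set (Finset V)) (hlin : Linear3 E)
    (hW : ¬ HasInducedCopy cycleHG E) (hF7 : ¬ HasInducedCopy fanoHG E) :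
    ¬ HasCopy fanHG E := by
  rintro ⟨φ, hinj, hmap⟩
  have hA : ({0,1,2} : Finset (Fin 7)).image φ ∈ E := hmap _ (by simp [fanHG])
  have hB : ({0,3,4} : Finset (Fin 7)).image φ ∈ E := hmap _ (by simp [fanHG])
  have hC : ({0,5,6} : Finset (Fin 7)).image φ ∈ E := hmap _ (by simp [fanHG])
  have hD : ({2,4,6} : Finset (Fin 7)).image φ ∈ E := hmap _ (by simp [fanHG])
  -- three applications of the cycle lemma
  have step : ∀ c : Fin 6 → Fin 7, Function.Injective c →
      (({0,1,2} : Finset (Fin 6)).image c).image φ ∈ E →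
      (({2,3,4} : Finset (Fin 6)).image c).image φ ∈ E →
      (({4,5,0} : Finset (Fin 6)).image c).image φ ∈ E →
      (({1,3,5} : Finset (Fin 6)).image c).image φ ∈ E := by
    intro c hc h1 h2 h3
    have := cycle_step hlin hW (ψ := φ ∘ c) (hinj.comp hc) ?_
    · rwa [← Finset.image_image] at this
    · intro e he
      simp only [cycleHG, Set.mem_insert_iff, Set.mem_singleton_iff] at he
      rcases he with rfl | rfl | rfl <;> rw [← Finset.image_image] <;> assumption
  have e1 : ({1,4,5} : Finset (Fin 7)).image φ ∈ E := by
    have := step ![0,1,2,4,6,5] (by decide) ?_ ?_ ?_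
    · rwa [show ({1,3,5} : Finset (Fin 6)).image ![0,1,2,4,6,5] = ({1,4,5} : Finset (Fin 7)) from by decide] at this
    · rwa [show ({0,1,2} : Finset (Fin 6)).image ![0,1,2,4,6,5] = ({0,1,2} : Finset (Fin 7)) from by decide]
    · rwa [show ({2,3,4} : Finset (Fin 6)).image ![0,1,2,4,6,5] = ({2,4,6} : Finset (Fin 7)) from by decide]
    · rwa [show ({4,5,0} : Finset (Fin 6)).image ![0,1,2,4,6,5] = ({0,5,6} : Finset (Fin 7)) from by decide]
  have e2 : ({1,3,6} : Finset (Fin 7)).image φ ∈ E := by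
    have := step ![0,1,2,6,4,3] (by decide) ?_ ?_ ?_
    · rwa [show ({1,3,5} : Finset (Fin 6)).image ![0,1,2,6,4,3] = ({1,3,6} : Finset (Fin 7)) from by decide] at this
    · rwa [show ({0,1,2} : Finset (Fin 6)).image ![0,1,2,6,4,3] = ({0,1,2} : Finset (Fin 7)) from by decide]
    · rwa [show ({2,3,4} : Finset (Fin 6)).image ![0,1,2,6,4,3] = ({2,4,6} : Finset (Fin 7)) from by decide]
    · rwa [show ({4,5,0} : Finset (Fin 6)).image ![0,1,2,6,4,3] = ({0,3,4} : Finset (Fin 7)) from by decide]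
  have e3 : ({2,3,5} : Finset (Fin 7)).image φ ∈ E := by
    have := step ![0,3,4,2,6,5] (by decide) ?_ ?_ ?_
    · rwa [show ({1,3,5} : Finset (Fin 6)).image ![0,3,4,2,6,5] = ({2,3,5} : Finset (Fin 7)) from by decide] at this
    · rwa [show ({0,1,2} : Finset (Fin 6)).image ![0,3,4,2,6,5] = ({0,3,4} : Finset (Fin 7)) from by decide]
    · rwa [show ({2,3,4} : Finset (Fin 6)).image ![0,3,4,2,6,5] = ({2,4,6} : Finset (Fin 7)) from by decide]
    · rwa [show ({4,5,0} : Finset (Fin 6)).image ![0,3,4,2,6,5] = ({0,5,6} : Finset (Fin 7)) from by decide]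
  -- assemble an induced Fano copy via the swap 5 ↔ 6
  apply hF7
  refine ⟨φ ∘ ![0,1,2,3,4,6,5], hinj.comp (by decide), ?_, ?_⟩
  · intro e he
    simp only [fanoHG, Set.mem_insert_iff, Set.mem_singleton_iff] at he
    rcases he with rfl | rfl | rfl | rfl | rfl | rfl | rfl <;> rw [← Finset.image_image]
    · rwa [show ({0,1,2} : Finset (Fin 7)).image ![0,1,2,3,4,6,5] = ({0,1,2} : Finset (Fin 7)) from by decide]
    · rwa [show ({0,3,4} : Finset (Fin 7)).image ![0,1,2,3,4,6,5] = ({0,3,4} : Finset (Fin 7)) from by decide]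
    · rwa [show ({0,5,6} : Finset (Fin 7)).image ![0,1,2,3,4,6,5] = ({0,5,6} : Finset (Fin 7)) from by decide]
    · rwa [show ({1,3,5} : Finset (Fin 7)).image ![0,1,2,3,4,6,5] = ({1,3,6} : Finset (Fin 7)) from by decide]
    · rwa [show ({1,4,6} : Finset (Fin 7)).image ![0,1,2,3,4,6,5] = ({1,4,5} : Finset (Fin 7)) from by decide]
    · rwa [show ({2,3,6} : Finset (Fin 7)).image ![0,1,2,3,4,6,5] = ({2,3,5} : Finset (Fin 7)) from by decide]
    · rwa [show ({2,4,5} : Finset (Fin 7)).image ![0,1,2,3,4,6,5] = ({2,4,6} : Finset (Fin 7)) from by decide]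
  · intro f hfE hfr
    by_contra hcon
    push_neg at hcon
    have hinj' : Function.Injective (φ ∘ ![0,1,2,3,4,6,5]) := hinj.comp (by decide)
    obtain ⟨f₀, rfl⟩ := pullback f hfr
    have hcard : f₀.card = 3 := by
      have := hlin.1 _ hfE
      rwa [Finset.card_image_of_injective _ hinj'] at this
    have key : ∀ s : Finset (Fin 7), s ∈ fanoHG → (f₀ ∩ s).card ≤ 1 := by
      intro s hs
      have hne : f₀.image (φ ∘ ![0,1,2,3,4,6,5]) ≠ s.image (φ ∘ ![0,1,2,3,4,6,5]) := hcon s hs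
      have hsE : s.image (φ ∘ ![0,1,2,3,4,6,5]) ∈ E := by
        simp only [fanoHG, Set.mem_insert_iff, Set.mem_singleton_iff] at hs
        rcases hs with rfl | rfl | rfl | rfl | rfl | rfl | rfl <;> rw [← Finset.image_image]
        · rwa [show ({0,1,2} : Finset (Fin 7)).image ![0,1,2,3,4,6,5] = ({0,1,2} : Finset (Fin 7)) from by decide]
        · rwa [show ({0,3,4} : Finset (Fin 7)).image ![0,1,2,3,4,6,5] = ({0,3,4} : Finset (Fin 7)) from by decide]
        · rwa [show ({0,5,6} : Finset (Fin 7)).image ![0,1,2,3,4,6,5] = ({0,5,6} : Finset (Fin 7)) from by decide]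
        · rwa [show ({1,3,5} : Finset (Fin 7)).image ![0,1,2,3,4,6,5] = ({1,3,6} : Finset (Fin 7)) from by decide]
        · rwa [show ({1,4,6} : Finset (Fin 7)).image ![0,1,2,3,4,6,5] = ({1,4,5} : Finset (Fin 7)) from by decide]
        · rwa [show ({2,3,6} : Finset (Fin 7)).image ![0,1,2,3,4,6,5] = ({2,3,5} : Finset (Fin 7)) from by decide]
        · rwa [show ({2,4,5} : Finset (Fin 7)).image ![0,1,2,3,4,6,5] = ({2,4,6} : Finset (Fin 7)) from by decide]
      have := hlin.2 _ hfE _ hsE hne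
      rwa [← Finset.image_inter _ _ hinj', Finset.card_image_of_injective _ hinj'] at this
    have h1 := key {0,1,2} (by simp [fanoHG])
    have h2 := key {0,3,4} (by simp [fanoHG])
    have h3 := key {0,5,6} (by simp [fanoHG])
    have h4 := key {1,3,5} (by simp [fanoHG])
    have h5 := key {1,4,6} (by simp [fanoHG])
    have h6 := key {2,3,6} (by simp [fanoHG])
    have h7 := key {2,4,5} (by simp [fanoHG])
    have gen : ∀ g : Finset (Fin 7), g.card = 3 → (g ∩ {0,1,2}).card ≤ 1 →
        (g ∩ {0,3,4}).card ≤ 1 → (g ∩ {0,5,6}).card ≤ 1 → (g ∩ {1,3,5}).card ≤ 1 →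
        (g ∩ {1,4,6}).card ≤ 1 → (g ∩ {2,3,6}).card ≤ 1 → (g ∩ {2,4,5}).card ≤ 1 → False := by
      decide
    exact gen f₀ hcard h1 h2 h3 h4 h5 h6 h7

end Paper
end

section
/- Every linear 3-uniform hypergraph on n vertices that contains no induced copy of the linear 3-cycle 𝒲³ and no induced copy of the Fano hypergraph F₇ has at most n²/9 edges. -/
open Filter

namespace Paper

variable {V W : Type*} [DecidableEq V] [DecidableEq W]

set_option maxRecDepth 10000

def cycL : List (Finset (Fin 6)) := [{0, 1, 2}, {2, 3, 4}, {4, 5, 0}]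
def fanoL : List (Finset (Fin 7)) := [{0, 1, 2}, {0, 3, 4}, {0, 5, 6}, {1, 3, 5}, {1, 4, 6}, {2, 3, 6}, {2, 4, 5}]

lemma cyc_decide : ∀ s : Finset (Fin 6), s.card = 3 → s ∉ cycL →
    (∀ t ∈ cycL, (s ∩ t).card ≤ 1) → s = ({1,3,5} : Finset (Fin 6)) := by decide

lemma fano_decide : ∀ s : Finset (Fin 7), s.card = 3 → s ∉ fanoL →
    ∃ t ∈ fanoL, 2 ≤ (s ∩ t).card := by decide

lemma nodup_of_card {l : List V} (h : l.toFinset.card = l.length) : l.Nodup := by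
  have h2 : ((l : Multiset V)).toFinset.card = Multiset.card (l : Multiset V) := by simpa using h
  simpa using Multiset.toFinset_card_eq_card_iff_nodup.mp h2

lemma preimage_repr {k : ℕ} (φ : Fin k → V) (hφ : Function.Injective φ)
    (g : Finset V) (hsub : (g : Set V) ⊆ Set.range φ) :
    ∃ s : Finset (Fin k), g = s.image φ := by
  refine ⟨g.preimage φ (hφ.injOn), ?_⟩
  rw [Finset.image_preimage]
  ext x
  simp only [Finset.mem_filter, Finset.mem_univ, true_and]
  exact ⟨fun hx => ⟨hx, by simpa using hsub hx⟩, fun hx => hx.1⟩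

lemma pasch (E : Set (Finset V)) (hlin : Linear3 E) (hW : ¬ HasInducedCopy cycleHG E)
    (a b c d e f : V) (h6 : ({a,b,c,d,e,f} : Finset V).card = 6)
    (h1 : ({a,b,c} : Finset V) ∈ E) (h2 : ({c,d,e} : Finset V) ∈ E)
    (h3 : ({e,f,a} : Finset V) ∈ E) : ({b,d,f} : Finset V) ∈ E := by
  classical
  have hnd : ([a,b,c,d,e,f] : List V).Nodup := by
    apply nodup_of_card
    have h' : ([a,b,c,d,e,f] : List V).toFinset = {a,b,c,d,e,f} := by simp
    rw [h', h6]; rfl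
  set l : List V := [a,b,c,d,e,f] with hl
  have hlen : l.length = 6 := rfl
  set φ : Fin 6 → V := fun i => l.get (Fin.cast hlen.symm i) with hφdef
  have hφ : Function.Injective φ := by
    intro i j hij
    have := (List.nodup_iff_injective_get.mp hnd) hij
    simpa [Fin.ext_iff] using this
  have p0 : φ 0 = a := rfl
  have p1 : φ 1 = b := rfl
  have p2 : φ 2 = c := rfl
  have p3 : φ 3 = d := rfl
  have p4 : φ 4 = e := rfl
  have p5 : φ 5 = f := rfl
  have e1 : (({0,1,2} : Finset (Fin 6)).image φ) = {a,b,c} := by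
    simp [Finset.image_insert, p0,p1,p2,p3,p4,p5]
  have e2 : (({2,3,4} : Finset (Fin 6)).image φ) = {c,d,e} := by
    simp [Finset.image_insert, p0,p1,p2,p3,p4,p5]
  have e3 : (({4,5,0} : Finset (Fin 6)).image φ) = {e,f,a} := by
    simp [Finset.image_insert, p0,p1,p2,p3,p4,p5]
  have hmaps : ∀ t ∈ cycleHG, t.image φ ∈ E := by
    intro t ht
    simp only [cycleHG, Set.mem_insert_iff, Set.mem_singleton_iff] at ht
    rcases ht with h | h | h <;> subst h
    · rw [e1]; exact h1
    · rw [e2]; exact h2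
    · rw [e3]; exact h3
  have key : ∃ g ∈ E, (g : Set V) ⊆ Set.range φ ∧ ∀ t ∈ cycleHG, g ≠ t.image φ := by
    by_contra hcon
    push_neg at hcon
    exact hW ⟨φ, hφ, hmaps, hcon⟩
  obtain ⟨g, hgE, hgsub, hgne⟩ := key
  obtain ⟨s, rfl⟩ := preimage_repr φ hφ g hgsub
  have hscard : s.card = 3 := by
    rw [← Finset.card_image_of_injective s hφ]
    exact hlin.1 _ hgE
  have hsnot : s ∉ cycL := by
    intro hs
    have : s ∈ cycleHG := by
      simp only [cycleHG, Set.mem_insert_iff, Set.mem_singleton_iff]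
      simpa [cycL] using hs
    exact hgne s this rfl
  have hint : ∀ t ∈ cycL, (s ∩ t).card ≤ 1 := by
    intro t ht
    have htc : t ∈ cycleHG := by
      simp only [cycleHG, Set.mem_insert_iff, Set.mem_singleton_iff]
      simpa [cycL] using ht
    have h1' := hlin.2 _ hgE _ (hmaps t htc) (hgne t htc)
    rw [← Finset.image_inter _ _ hφ] at h1'
    rwa [Finset.card_image_of_injective _ hφ] at h1'
  have := cyc_decide s hscard hsnot hint
  subst this
  have : (({1,3,5} : Finset (Fin 6)).image φ) = {b,d,f} := by
    simp [Finset.image_insert, p0,p1,p2,p3,p4,p5]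
  rwa [this] at hgE

lemma fano7 (E : Set (Finset V)) (hlin : Linear3 E) (hF7 : ¬ HasInducedCopy fanoHG E)
    (a b c x y z w : V) (h7 : ({a,b,c,x,y,z,w} : Finset V).card = 7)
    (k1 : ({a,b,c} : Finset V) ∈ E) (k2 : ({a,x,y} : Finset V) ∈ E)
    (k3 : ({a,z,w} : Finset V) ∈ E) (k4 : ({b,x,z} : Finset V) ∈ E)
    (k5 : ({b,y,w} : Finset V) ∈ E) (k6 : ({c,x,w} : Finset V) ∈ E)
    (k7 : ({c,y,z} : Finset V) ∈ E) : False := by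
  classical
  have hnd : ([a,b,c,x,y,z,w] : List V).Nodup := by
    apply nodup_of_card
    have h' : ([a,b,c,x,y,z,w] : List V).toFinset = {a,b,c,x,y,z,w} := by simp
    rw [h', h7]; rfl
  set l : List V := [a,b,c,x,y,z,w] with hl
  have hlen : l.length = 7 := rfl
  set φ : Fin 7 → V := fun i => l.get (Fin.cast hlen.symm i) with hφdef
  have hφ : Function.Injective φ := by
    intro i j hij
    have := (List.nodup_iff_injective_get.mp hnd) hij
    simpa [Fin.ext_iff] using this
  have p0 : φ 0 = a := rfl
  have p1 : φ 1 = b := rfl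
  have p2 : φ 2 = c := rfl
  have p3 : φ 3 = x := rfl
  have p4 : φ 4 = y := rfl
  have p5 : φ 5 = z := rfl
  have p6 : φ 6 = w := rfl
  have hmaps : ∀ t ∈ fanoHG, t.image φ ∈ E := by
    intro t ht
    simp only [fanoHG, Set.mem_insert_iff, Set.mem_singleton_iff] at ht
    rcases ht with h | h | h | h | h | h | h <;> subst h <;>
      simp [Finset.image_insert, p0,p1,p2,p3,p4,p5,p6]
    exacts [k1, k2, k3, k4, k5, k6, k7]
  apply hF7
  refine ⟨φ, hφ, hmaps, ?_⟩
  intro g hgE hgsub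
  obtain ⟨s, rfl⟩ := preimage_repr φ hφ g hgsub
  have hscard : s.card = 3 := by
    rw [← Finset.card_image_of_injective s hφ]
    exact hlin.1 _ hgE
  by_cases hs : s ∈ fanoL
  · refine ⟨s, ?_, rfl⟩
    simp only [fanoHG, Set.mem_insert_iff, Set.mem_singleton_iff]
    simpa [fanoL] using hs
  · obtain ⟨t, htL, ht2⟩ := fano_decide s hscard hs
    have htc : t ∈ fanoHG := by
      simp only [fanoHG, Set.mem_insert_iff, Set.mem_singleton_iff]
      simpa [fanoL] using htL
    by_cases hgt : s.image φ = t.image φ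
    · exact ⟨t, htc, hgt⟩
    · exfalso
      have h1' := hlin.2 _ hgE _ (hmaps t htc) hgt
      rw [← Finset.image_inter _ _ hφ, Finset.card_image_of_injective _ hφ] at h1'
      omega

lemma two_common (E : Set (Finset V)) (hlin : Linear3 E) {g h : Finset V}
    (hg : g ∈ E) (hh : h ∈ E) {u v : V} (hu1 : u ∈ g) (hu2 : u ∈ h)
    (hv1 : v ∈ g) (hv2 : v ∈ h) (huv : u ≠ v) : g = h := by
  by_contra hne
  have h1 := hlin.2 _ hg _ hh hne
  have : ({u, v} : Finset V) ⊆ g ∩ h := by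
    intro t ht
    simp only [Finset.mem_insert, Finset.mem_singleton] at ht
    rcases ht with rfl | rfl <;> simp [Finset.mem_inter, *]
  have h2 := Finset.card_le_card this
  rw [Finset.card_insert_of_notMem (by simpa using huv), Finset.card_singleton] at h2
  omega

lemma normalize (E : Set (Finset V)) (hlin : Linear3 E) {e0 : Finset V}
    (he0 : e0 ∈ E) {g1 : Finset V} (hg1 : g1 ∈ E) {q u : V}
    (hq : q ∈ e0) (hqg : q ∈ g1) (hug : u ∈ g1) (hue : u ∉ e0) :
    ∃ v, g1 = {q, u, v} ∧ v ∉ e0 ∧ v ≠ u ∧ v ≠ q := by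
  have hne : g1 ≠ e0 := fun h => hue (h ▸ hug)
  have hint : (g1 ∩ e0).card ≤ 1 := hlin.2 _ hg1 _ he0 hne
  have hsing : g1 ∩ e0 = {q} := by
    apply Finset.eq_singleton_iff_unique_mem.mpr
    refine ⟨Finset.mem_inter.mpr ⟨hqg, hq⟩, fun t ht => ?_⟩
    exact Finset.card_le_one.mp hint t ht q (Finset.mem_inter.mpr ⟨hqg, hq⟩)
  have hc3 : g1.card = 3 := hlin.1 _ hg1
  have hsd : (g1 \ e0).card = 2 := by
    have := Finset.card_sdiff_add_card_inter g1 e0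
    rw [hsing] at this
    simp at this
    omega
  have humem : u ∈ g1 \ e0 := Finset.mem_sdiff.mpr ⟨hug, hue⟩
  have her : ((g1 \ e0).erase u).card = 1 := by
    rw [Finset.card_erase_of_mem humem, hsd]
  obtain ⟨v, hv⟩ := Finset.card_eq_one.mp her
  have hvmem : v ∈ (g1 \ e0).erase u := hv ▸ Finset.mem_singleton_self v
  have hvu : v ≠ u := Finset.ne_of_mem_erase hvmem
  have hvsd : v ∈ g1 \ e0 := Finset.mem_of_mem_erase hvmem
  have hvg : v ∈ g1 := (Finset.mem_sdiff.mp hvsd).1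
  have hve : v ∉ e0 := (Finset.mem_sdiff.mp hvsd).2
  have hvq : v ≠ q := fun h => hve (h ▸ hq)
  have huq : u ≠ q := fun h => hue (h ▸ hq)
  refine ⟨v, ?_, hve, hvu, hvq⟩
  have hsub : ({q, u, v} : Finset V) ⊆ g1 := by
    intro t ht
    simp only [Finset.mem_insert, Finset.mem_singleton] at ht
    rcases ht with rfl | rfl | rfl <;> assumption
  have hcard : ({q, u, v} : Finset V).card = 3 := by
    rw [Finset.card_insert_of_notMem (by simp [huq.symm, hvq.symm]),
      Finset.card_insert_of_notMem (by simp [hvu.symm]), Finset.card_singleton]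
  exact (Finset.eq_of_subset_of_card_le hsub (by omega)).symm

lemma card3_distinct {p q r : V} (h : ({p,q,r} : Finset V).card = 3) :
    p ≠ q ∧ p ≠ r ∧ q ≠ r := by
  have hnd : ([p,q,r] : List V).Nodup := by
    apply nodup_of_card
    have h' : ([p,q,r] : List V).toFinset = {p,q,r} := by simp
    rw [h', h]; rfl
  simp only [List.nodup_cons, List.mem_cons, List.mem_singleton, List.nodup_nil] at hnd
  tauto

lemma card_of_distinct6 {p q r x y z : V} (h1 : p ≠ q) (h2 : p ≠ r) (h3 : q ≠ r)
    (h4 : x ≠ y) (h5 : x ≠ z) (h6 : y ≠ z)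
    (hx : x ≠ p ∧ x ≠ q ∧ x ≠ r) (hy : y ≠ p ∧ y ≠ q ∧ y ≠ r)
    (hz : z ≠ p ∧ z ≠ q ∧ z ≠ r) :
    ({p,q,r,x,y,z} : Finset V).card = 6 := by
  have h' : ({p,q,r,x,y,z} : Finset V) = ([p,q,r,x,y,z] : List V).toFinset := by simp
  rw [h']
  rw [List.toFinset_card_of_nodup]
  · rfl
  · simp only [List.nodup_cons, List.mem_cons, List.mem_singleton, List.nodup_nil]
    tauto

lemma closure (E : Set (Finset V)) (hlin : Linear3 E) (hW : ¬ HasInducedCopy cycleHG E)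
    (p q r x y z : V) (hpqr : ({p,q,r} : Finset V).card = 3)
    (he0 : ({p,q,r} : Finset V) ∈ E)
    (hx : x ∉ ({p,q,r} : Finset V)) (hy : y ∉ ({p,q,r} : Finset V))
    (hz : z ∉ ({p,q,r} : Finset V))
    (hxy : x ≠ y) (hxz : x ≠ z) (hyz : y ≠ z)
    (hf : ({p,x,y} : Finset V) ∈ E) (hg : ({q,x,z} : Finset V) ∈ E) :
    ({r,y,z} : Finset V) ∈ E := by
  obtain ⟨hpq, hpr, hqr⟩ := card3_distinct hpqr
  simp only [Finset.mem_insert, Finset.mem_singleton, not_or] at hx hy hz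
  have h6 : ({q,r,p,y,x,z} : Finset V).card = 6 := by
    exact card_of_distinct6 (p := q) (q := r) (r := p) (x := y) (y := x) (z := z)
      hqr hpq.symm hpr.symm hxy.symm hyz hxz
      ⟨hy.2.1, hy.2.2, hy.1⟩ ⟨hx.2.1, hx.2.2, hx.1⟩ ⟨hz.2.1, hz.2.2, hz.1⟩
  have e1 : ({q,r,p} : Finset V) = {p,q,r} := by
    rw [Finset.pair_comm r p, Finset.insert_comm q p {r}]
  have e2 : ({p,y,x} : Finset V) = {p,x,y} := by rw [Finset.pair_comm y x]
  have e3 : ({x,z,q} : Finset V) = {q,x,z} := by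
    rw [Finset.pair_comm z q, Finset.insert_comm x q {z}]
  have he0' : ({q,r,p} : Finset V) ∈ E := by rw [e1]; exact he0
  have hf' : ({p,y,x} : Finset V) ∈ E := by rw [e2]; exact hf
  have hg' : ({x,z,q} : Finset V) ∈ E := by rw [e3]; exact hg
  exact pasch E hlin hW q r p y x z h6 he0' hf' hg'

lemma card_of_distinct7 {a b c x y z w : V} (h1 : a ≠ b) (h2 : a ≠ c) (h3 : b ≠ c)
    (hx : x ≠ a ∧ x ≠ b ∧ x ≠ c) (hy : y ≠ a ∧ y ≠ b ∧ y ≠ c)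
    (hz : z ≠ a ∧ z ≠ b ∧ z ≠ c) (hw : w ≠ a ∧ w ≠ b ∧ w ≠ c)
    (h4 : x ≠ y) (h5 : x ≠ z) (h6 : x ≠ w) (h7 : y ≠ z) (h8 : y ≠ w) (h9 : z ≠ w) :
    ({a,b,c,x,y,z,w} : Finset V).card = 7 := by
  have h' : ({a,b,c,x,y,z,w} : Finset V) = ([a,b,c,x,y,z,w] : List V).toFinset := by simp
  rw [h']
  rw [List.toFinset_card_of_nodup]
  · rfl
  · simp only [List.nodup_cons, List.mem_cons, List.mem_singleton, List.nodup_nil]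
    tauto

lemma noThree (E : Set (Finset V)) (hlin : Linear3 E) (hW : ¬ HasInducedCopy cycleHG E)
    (hF7 : ¬ HasInducedCopy fanoHG E) (a b c x : V)
    (habc : ({a,b,c} : Finset V).card = 3) (he0 : ({a,b,c} : Finset V) ∈ E)
    (hx : x ∉ ({a,b,c} : Finset V))
    {g1 g2 g3 : Finset V} (hg1 : g1 ∈ E) (hg2 : g2 ∈ E) (hg3 : g3 ∈ E)
    (ha1 : a ∈ g1) (hx1 : x ∈ g1) (hb2 : b ∈ g2) (hx2 : x ∈ g2)
    (hc3 : c ∈ g3) (hx3 : x ∈ g3) : False := by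
  obtain ⟨hab, hac, hbc⟩ := card3_distinct habc
  obtain ⟨y, hg1e, hye, hyx, hya⟩ := normalize E hlin he0 hg1
    (show a ∈ ({a,b,c} : Finset V) by simp) ha1 hx1 hx
  obtain ⟨z, hg2e, hze, hzx, hzb⟩ := normalize E hlin he0 hg2
    (show b ∈ ({a,b,c} : Finset V) by simp) hb2 hx2 hx
  obtain ⟨w, hg3e, hwe, hwx, hwc⟩ := normalize E hlin he0 hg3
    (show c ∈ ({a,b,c} : Finset V) by simp) hc3 hx3 hx
  have hg1E : ({a,x,y} : Finset V) ∈ E := by rw [← hg1e]; exact hg1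
  have hg2E : ({b,x,z} : Finset V) ∈ E := by rw [← hg2e]; exact hg2
  have hg3E : ({c,x,w} : Finset V) ∈ E := by rw [← hg3e]; exact hg3
  have hxmem : ¬x = a ∧ ¬x = b ∧ ¬x = c := by
    simpa only [Finset.mem_insert, Finset.mem_singleton, not_or] using hx
  have hymem : ¬y = a ∧ ¬y = b ∧ ¬y = c := by
    simpa only [Finset.mem_insert, Finset.mem_singleton, not_or] using hye
  have hzmem : ¬z = a ∧ ¬z = b ∧ ¬z = c := by
    simpa only [Finset.mem_insert, Finset.mem_singleton, not_or] using hze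
  have hwmem : ¬w = a ∧ ¬w = b ∧ ¬w = c := by
    simpa only [Finset.mem_insert, Finset.mem_singleton, not_or] using hwe
  have hyz : y ≠ z := by
    rintro rfl
    have heq : ({a,x,y} : Finset V) = ({b,x,y} : Finset V) :=
      two_common E hlin hg1E hg2E (by simp) (by simp) (by simp) (by simp) hyx.symm
    have : a ∈ ({b,x,y} : Finset V) := by rw [← heq]; simp
    simp only [Finset.mem_insert, Finset.mem_singleton] at this
    rcases this with h | h | h
    · exact hab h
    · exact hxmem.1 h.symm
    · exact hymem.1 h.symm
  have hyw : y ≠ w := by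
    rintro rfl
    have heq : ({a,x,y} : Finset V) = ({c,x,y} : Finset V) :=
      two_common E hlin hg1E hg3E (by simp) (by simp) (by simp) (by simp) hyx.symm
    have : a ∈ ({c,x,y} : Finset V) := by rw [← heq]; simp
    simp only [Finset.mem_insert, Finset.mem_singleton] at this
    rcases this with h | h | h
    · exact hac h
    · exact hxmem.1 h.symm
    · exact hymem.1 h.symm
  have hzw : z ≠ w := by
    rintro rfl
    have heq : ({b,x,z} : Finset V) = ({c,x,z} : Finset V) :=
      two_common E hlin hg2E hg3E (by simp) (by simp) (by simp) (by simp) hzx.symm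
    have : b ∈ ({c,x,z} : Finset V) := by rw [← heq]; simp
    simp only [Finset.mem_insert, Finset.mem_singleton] at this
    rcases this with h | h | h
    · exact hbc h
    · exact hxmem.2.1 h.symm
    · exact hzmem.2.1 h.symm
  have c1 : ({c,y,z} : Finset V) ∈ E :=
    closure E hlin hW a b c x y z habc he0 hx hye hze hyx.symm hzx.symm hyz hg1E hg2E
  have eacb : ({a,c,b} : Finset V) = {a,b,c} := by rw [Finset.pair_comm c b]
  have c2 : ({b,y,w} : Finset V) ∈ E := by
    refine closure E hlin hW a c b x y w ?_ ?_ ?_ ?_ ?_ hyx.symm hwx.symm hyw hg1E hg3E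
    · rw [eacb]; exact habc
    · rw [eacb]; exact he0
    · rw [eacb]; exact hx
    · rw [eacb]; exact hye
    · rw [eacb]; exact hwe
  have ebca : ({b,c,a} : Finset V) = {a,b,c} := by
    rw [Finset.pair_comm c a, Finset.insert_comm b a {c}]
  have c3 : ({a,z,w} : Finset V) ∈ E := by
    refine closure E hlin hW b c a x z w ?_ ?_ ?_ ?_ ?_ hzx.symm hwx.symm hzw hg2E hg3E
    · rw [ebca]; exact habc
    · rw [ebca]; exact he0
    · rw [ebca]; exact hx
    · rw [ebca]; exact hze
    · rw [ebca]; exact hwe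
  have h7 : ({a,b,c,x,y,z,w} : Finset V).card = 7 :=
    card_of_distinct7 hab hac hbc hxmem hymem hzmem hwmem
      hyx.symm hzx.symm hwx.symm hyz hyw hzw
  exact fano7 E hlin hF7 a b c x y z w h7 he0 hg1E c3 hg2E c2 hg3E c1

lemma key_deg (n : ℕ) (E : Finset (Finset (Fin n)))
    (hlin : Linear3 (E : Set (Finset (Fin n))))
    (hW : ¬ HasInducedCopy cycleHG (E : Set (Finset (Fin n))))
    (hF7 : ¬ HasInducedCopy fanoHG (E : Set (Finset (Fin n))))
    (e0 : Finset (Fin n)) (he0 : e0 ∈ E) :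
    ∑ v ∈ e0, (E.filter (fun f => v ∈ f)).card ≤ n := by
  classical
  have he0' : e0 ∈ (E : Set (Finset (Fin n))) := Finset.mem_coe.mpr he0
  have he0c : e0.card = 3 := hlin.1 e0 he0'
  obtain ⟨a, b, c, hab, hac, hbc, he0e⟩ := Finset.card_eq_three.mp he0c
  -- step 1
  have step1 : ∑ v ∈ e0, (E.filter (fun f => v ∈ f)).card
      = ∑ f ∈ E, (e0 ∩ f).card := by
    have h1 : ∀ v : Fin n, (E.filter (fun f => v ∈ f)).card
        = ∑ f ∈ E, if v ∈ f then 1 else 0 := by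
      intro v; rw [Finset.card_filter]
    calc ∑ v ∈ e0, (E.filter (fun f => v ∈ f)).card
        = ∑ v ∈ e0, ∑ f ∈ E, if v ∈ f then 1 else 0 := by
          exact Finset.sum_congr rfl fun v _ => h1 v
      _ = ∑ f ∈ E, ∑ v ∈ e0, if v ∈ f then 1 else 0 := Finset.sum_comm
      _ = ∑ f ∈ E, (e0 ∩ f).card := by
          refine Finset.sum_congr rfl fun f _ => ?_
          rw [← Finset.card_filter, Finset.filter_mem_eq_inter]
  -- step 2
  have step2 : ∑ f ∈ E, (e0 ∩ f).card
      = 3 + ∑ f ∈ E.erase e0, (e0 ∩ f).card := by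
    rw [← Finset.add_sum_erase E _ he0, Finset.inter_self, he0c]
  -- step 3
  set N : Finset (Finset (Fin n)) := (E.erase e0).filter (fun f => (f ∩ e0).Nonempty)
    with hN
  have step3 : ∑ f ∈ E.erase e0, (e0 ∩ f).card ≤ N.card := by
    have hle : ∀ f ∈ E.erase e0, (e0 ∩ f).card ≤ if (f ∩ e0).Nonempty then 1 else 0 := by
      intro f hf
      by_cases hne : (f ∩ e0).Nonempty
      · rw [if_pos hne]
        have hfE : f ∈ (E : Set (Finset (Fin n))) :=
          Finset.mem_coe.mpr (Finset.mem_of_mem_erase hf)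
        exact hlin.2 e0 he0' f hfE (Finset.ne_of_mem_erase hf).symm
      · rw [if_neg hne]
        rw [Finset.not_nonempty_iff_eq_empty] at hne
        rw [Finset.inter_comm, hne, Finset.card_empty]
    calc ∑ f ∈ E.erase e0, (e0 ∩ f).card
        ≤ ∑ f ∈ E.erase e0, if (f ∩ e0).Nonempty then 1 else 0 :=
          Finset.sum_le_sum hle
      _ = N.card := by rw [hN, Finset.card_filter]
  -- membership facts for N
  have hNfact : ∀ f ∈ N, f ∈ E ∧ f ≠ e0 ∧ (f ∩ e0).Nonempty := by
    intro f hf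
    rw [hN, Finset.mem_filter, Finset.mem_erase] at hf
    exact ⟨hf.1.2, hf.1.1, hf.2⟩
  have hNsing : ∀ f ∈ N, ∃ p, f ∩ e0 = {p} := by
    intro f hf
    obtain ⟨hfE, hfne, hfcap⟩ := hNfact f hf
    have h1 := hlin.2 f (Finset.mem_coe.mpr hfE) e0 he0' hfne
    have : (f ∩ e0).card = 1 := le_antisymm h1 (Finset.card_pos.mpr hfcap)
    exact Finset.card_eq_one.mp this
  have hNsd : ∀ f ∈ N, (f \ e0).card = 2 := by
    intro f hf
    obtain ⟨p, hp⟩ := hNsing f hf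
    have h2 := Finset.card_sdiff_add_card_inter f e0
    rw [hp, Finset.card_singleton, hlin.1 f (Finset.mem_coe.mpr (hNfact f hf).1)] at h2
    omega
  -- the functions
  set nxt : Fin n → Fin n := fun v => if v = a then b else if v = b then c else a
    with hnxt
  set colOf : Finset (Fin n) → Fin n :=
    fun fs => if h : (fs ∩ e0).Nonempty then (fs ∩ e0).min' h else a with hcolOf
  set ψ : Finset (Fin n) → Fin n := fun fs =>
    if h : ∃ u, u ∈ fs \ e0 ∧ ∃ g ∈ E, nxt (colOf fs) ∈ g ∧ u ∈ g then h.choose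
    else if h2 : (fs \ e0).Nonempty then (fs \ e0).min' h2 else a with hψ
  have hcol : ∀ f ∈ N, f ∩ e0 = {colOf f} := by
    intro f hf
    obtain ⟨p, hp⟩ := hNsing f hf
    have : colOf f = p := by
      rw [hcolOf]
      dsimp only
      rw [dif_pos (by rw [hp]; exact Finset.singleton_nonempty p)]
      simp [hp]
    rw [this]; exact hp
  have hcol_e0 : ∀ f ∈ N, colOf f ∈ e0 ∧ colOf f ∈ f := by
    intro f hf
    have h1 := hcol f hf
    have : colOf f ∈ f ∩ e0 := by rw [h1]; exact Finset.mem_singleton_self _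
    rw [Finset.mem_inter] at this
    exact ⟨this.2, this.1⟩
  have hpsi_mem : ∀ f ∈ N, ψ f ∈ f \ e0 := by
    intro f hf
    have hsd : (f \ e0).Nonempty := by
      rw [← Finset.card_pos, hNsd f hf]; omega
    by_cases h1 : ∃ u, u ∈ f \ e0 ∧ ∃ g ∈ E, nxt (colOf f) ∈ g ∧ u ∈ g
    · rw [hψ]
      dsimp only
      rw [dif_pos h1]
      exact h1.choose_spec.1
    · rw [hψ]
      dsimp only
      rw [dif_neg h1, dif_pos hsd]
      exact Finset.min'_mem _ hsd
  -- branch dichotomy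
  have hbranch : ∀ f ∈ N, (∃ g ∈ E, nxt (colOf f) ∈ g ∧ ψ f ∈ g) ∨
      (∀ u ∈ f \ e0, ¬ ∃ g ∈ E, nxt (colOf f) ∈ g ∧ u ∈ g) := by
    intro f hf
    by_cases h1 : ∃ u, u ∈ f \ e0 ∧ ∃ g ∈ E, nxt (colOf f) ∈ g ∧ u ∈ g
    · left
      have hspec := h1.choose_spec
      have hcc : ψ f = h1.choose := by rw [hψ]; dsimp only; rw [dif_pos h1]
      rw [hcc]
      exact hspec.2
    · right
      intro u hu hC
      exact h1 ⟨u, hu, hC⟩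
  -- nxt computations
  have hna : nxt a = b := by rw [hnxt]; simp
  have hnb : nxt b = c := by rw [hnxt]; simp [hab.symm]
  have hnc : nxt c = a := by rw [hnxt]; simp [hac.symm, hbc.symm]
  have hnxt_mem : ∀ s ∈ e0, nxt s ∈ e0 ∧ nxt s ≠ s := by
    intro s hs
    rw [he0e] at hs
    simp only [Finset.mem_insert, Finset.mem_singleton] at hs
    rcases hs with rfl | rfl | rfl
    · rw [hna, he0e]; exact ⟨by simp, hab.symm⟩
    · rw [hnb, he0e]; exact ⟨by simp, hbc.symm⟩
    · rw [hnc, he0e]; exact ⟨by simp, hac⟩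
  have hnonid : ∀ s t, s ∈ e0 → t ∈ e0 → nxt s = t → nxt t ≠ s := by
    intro s t hs ht hst
    rw [he0e] at hs ht
    simp only [Finset.mem_insert, Finset.mem_singleton] at hs ht
    rcases hs with rfl | rfl | rfl <;> rcases ht with rfl | rfl | rfl
    · rw [hna]; exact hab.symm
    · rw [hnb]; exact hac.symm
    · rw [hna] at hst; exact absurd hst hbc
    · rw [hnb] at hst; exact absurd hst (Ne.symm hac)
    · rw [hnb]; exact hbc.symm
    · rw [hnc]; exact hab
    · rw [hna]; exact hbc
    · rw [hnc] at hst; exact absurd hst hab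
    · rw [hnc]; exact hac
  -- injectivity
  have hinj : Set.InjOn ψ ↑N := by
    intro f hf' g hg' heq
    have hf : f ∈ N := hf'
    have hg : g ∈ N := hg'
    by_contra hne
    obtain ⟨hfE, hfne, _⟩ := hNfact f hf
    obtain ⟨hgE, hgne, _⟩ := hNfact g hg
    have hfE' : f ∈ (E : Set (Finset (Fin n))) := Finset.mem_coe.mpr hfE
    have hgE' : g ∈ (E : Set (Finset (Fin n))) := Finset.mem_coe.mpr hgE
    have hxf : ψ f ∈ f \ e0 := hpsi_mem f hf
    have hxg : ψ f ∈ g \ e0 := by rw [heq]; exact hpsi_mem g hg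
    have hxf1 : ψ f ∈ f := (Finset.mem_sdiff.mp hxf).1
    have hxe0 : ψ f ∉ e0 := (Finset.mem_sdiff.mp hxf).2
    have hxg1 : ψ f ∈ g := (Finset.mem_sdiff.mp hxg).1
    obtain ⟨hpe0, hpf⟩ := hcol_e0 f hf
    obtain ⟨hqe0, hqg⟩ := hcol_e0 g hg
    have hpx : colOf f ≠ ψ f := fun h => hxe0 (h ▸ hpe0)
    by_cases hpq : colOf f = colOf g
    · exact hne (two_common (↑E) hlin hfE' hgE' hpf (hpq ▸ hqg) hxf1 hxg1 hpx)
    · obtain ⟨y, hfe, hye, hyx, hyp⟩ := normalize (↑E) hlin he0' hfE' hpe0 hpf hxf1 hxe0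
      obtain ⟨z, hge, hze, hzx, hzq⟩ := normalize (↑E) hlin he0' hgE' hqe0 hqg hxg1 hxe0
      have hymem : y ∈ f := by rw [hfe]; simp
      have hzmem : z ∈ g := by rw [hge]; simp
      have hyz : y ≠ z := by
        rintro rfl
        exact hne (two_common (↑E) hlin hfE' hgE' hxf1 hxg1 hymem hzmem hyx.symm)
      -- the third vertex r of e0
      have hpq_sub : ({colOf f, colOf g} : Finset (Fin n)) ⊆ e0 := by
        intro t ht
        simp only [Finset.mem_insert, Finset.mem_singleton] at ht
        rcases ht with rfl | rfl
        exacts [hpe0, hqe0]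
      have hpq2 : ({colOf f, colOf g} : Finset (Fin n)).card = 2 := by
        rw [Finset.card_insert_of_notMem (by simp [hpq]), Finset.card_singleton]
      have hr1 : (e0 \ {colOf f, colOf g}).card = 1 := by
        rw [Finset.card_sdiff_of_subset hpq_sub, he0c, hpq2]
      obtain ⟨r, hr⟩ := Finset.card_eq_one.mp hr1
      have hrmem : r ∈ e0 \ {colOf f, colOf g} := by
        rw [hr]; exact Finset.mem_singleton_self r
      have hre0 : r ∈ e0 := (Finset.mem_sdiff.mp hrmem).1
      have hrpq : r ≠ colOf f ∧ r ≠ colOf g := by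
        have := (Finset.mem_sdiff.mp hrmem).2
        simp only [Finset.mem_insert, Finset.mem_singleton, not_or] at this
        exact this
      have he0pqr : e0 = {colOf f, colOf g, r} := by
        have hsub : ({colOf f, colOf g, r} : Finset (Fin n)) ⊆ e0 := by
          intro t ht
          simp only [Finset.mem_insert, Finset.mem_singleton] at ht
          rcases ht with rfl | rfl | rfl
          exacts [hpe0, hqe0, hre0]
        have hc : ({colOf f, colOf g, r} : Finset (Fin n)).card = 3 := by
          rw [Finset.card_insert_of_notMem (by simp [hpq, hrpq.1.symm]),
            Finset.card_insert_of_notMem (by simp [hrpq.2.symm]), Finset.card_singleton]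
        exact (Finset.eq_of_subset_of_card_le hsub (by rw [hc, he0c])).symm
      have hpqr3 : ({colOf f, colOf g, r} : Finset (Fin n)).card = 3 := by
        rw [← he0pqr]; exact he0c
      have hcyz : ({r, y, z} : Finset (Fin n)) ∈ (E : Set (Finset (Fin n))) := by
        refine closure (↑E) hlin hW (colOf f) (colOf g) r (ψ f) y z hpqr3 ?_ ?_ ?_ ?_
          hyx.symm hzx.symm hyz ?_ ?_
        · rw [← he0pqr]; exact he0'
        · rw [← he0pqr]; exact hxe0
        · rw [← he0pqr]; exact hye
        · rw [← he0pqr]; exact hze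
        · rw [← hfe]; exact hfE'
        · rw [← hge]; exact hgE'
      have hcyzE : ({r, y, z} : Finset (Fin n)) ∈ E := Finset.mem_coe.mp hcyz
      have F2 : ∀ g1 g2 g3 : Finset (Fin n), g1 ∈ E → g2 ∈ E → g3 ∈ E →
          colOf f ∈ g1 → ψ f ∈ g1 → colOf g ∈ g2 → ψ f ∈ g2 → r ∈ g3 → ψ f ∈ g3 →
          False := by
        intro g1 g2 g3 h1 h2 h3 hp1 hx1 hq2 hx2 hr3 hx3
        have hsel : ∀ s ∈ e0, ∃ gg : Finset (Fin n), gg ∈ E ∧ s ∈ gg ∧ ψ f ∈ gg := by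
          intro s hs
          rw [he0pqr] at hs
          simp only [Finset.mem_insert, Finset.mem_singleton] at hs
          rcases hs with rfl | rfl | rfl
          exacts [⟨g1, h1, hp1, hx1⟩, ⟨g2, h2, hq2, hx2⟩, ⟨g3, h3, hr3, hx3⟩]
        obtain ⟨ga, hga, hsa, hxa⟩ := hsel a (by rw [he0e]; simp)
        obtain ⟨gb, hgb, hsb, hxb⟩ := hsel b (by rw [he0e]; simp)
        obtain ⟨gc, hgc, hsc, hxc⟩ := hsel c (by rw [he0e]; simp)
        exact noThree (↑E) hlin hW hF7 a b c (ψ f)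
          (by rw [← he0e]; exact he0c) (by rw [← he0e]; exact he0')
          (by rw [← he0e]; exact hxe0)
          (Finset.mem_coe.mpr hga) (Finset.mem_coe.mpr hgb) (Finset.mem_coe.mpr hgc)
          hsa hxa hsb hxb hsc hxc
      have hnp_cases : ∀ s, s ∈ e0 → s ≠ colOf f → s ≠ colOf g → s = r := by
        intro s hs h1 h2
        rw [he0pqr] at hs
        simp only [Finset.mem_insert, Finset.mem_singleton] at hs
        rcases hs with h | h | h
        · exact absurd h h1
        · exact absurd h h2
        · exact h
      -- nxt (colOf f) = colOf g
      have hnp : nxt (colOf f) = colOf g := by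
        have hnpe := hnxt_mem (colOf f) hpe0
        have hcases : nxt (colOf f) = colOf g ∨ nxt (colOf f) = r := by
          by_cases h : nxt (colOf f) = colOf g
          · exact Or.inl h
          · exact Or.inr (hnp_cases _ hnpe.1 hnpe.2 h)
        rcases hbranch f hf with ⟨g1, hg1, hnpg1, hxg1'⟩ | hB2
        · rcases hcases with h | h
          · exact h
          · exfalso
            rw [h] at hnpg1
            exact F2 f g g1 hfE hgE hg1 hpf hxf1 hqg hxg1 hnpg1 hxg1'
        · exfalso
          rcases hcases with h | h
          · exact hB2 (ψ f) hxf ⟨g, hgE, by rw [h]; exact hqg, hxg1⟩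
          · exact hB2 y (Finset.mem_sdiff.mpr ⟨hymem, hye⟩)
              ⟨{r, y, z}, hcyzE, by rw [h]; simp, by simp⟩
      have hnq : nxt (colOf g) = colOf f := by
        have hnqe := hnxt_mem (colOf g) hqe0
        have hcases : nxt (colOf g) = colOf f ∨ nxt (colOf g) = r := by
          by_cases h : nxt (colOf g) = colOf f
          · exact Or.inl h
          · exact Or.inr (hnp_cases _ hnqe.1 h hnqe.2)
        rcases hbranch g hg with ⟨g1, hg1, hnqg1, hxg1'⟩ | hB2
        · rcases hcases with h | h
          · exact h
          · exfalso
            have hxg2 : ψ g ∈ g1 := hxg1'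
            rw [h] at hnqg1
            rw [← heq] at hxg2
            exact F2 f g g1 hfE hgE hg1 hpf hxf1 hqg hxg1 hnqg1 hxg2
        · exfalso
          have hxgsd : ψ g ∈ g \ e0 := hpsi_mem g hg
          rcases hcases with h | h
          · refine hB2 (ψ g) hxgsd ⟨f, hfE, by rw [h]; exact hpf, ?_⟩
            rw [← heq]; exact hxf1
          · exact hB2 z (Finset.mem_sdiff.mpr ⟨hzmem, hze⟩)
              ⟨{r, y, z}, hcyzE, by rw [h]; simp, by simp⟩
      exact hnonid (colOf f) (colOf g) hpe0 hqe0 hnp hnq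
  -- conclude
  have hcard_le : N.card ≤ (Finset.univ \ e0).card := by
    apply Finset.card_le_card_of_injOn ψ _ hinj
    intro f hf
    exact Finset.mem_sdiff.mpr ⟨Finset.mem_univ _, (Finset.mem_sdiff.mp (hpsi_mem f hf)).2⟩
  have huniv : (Finset.univ \ e0).card = n - 3 := by
    rw [Finset.card_sdiff_of_subset (Finset.subset_univ e0), Finset.card_univ, Fintype.card_fin, he0c]
  have hn3 : 3 ≤ n := by
    have h1 := Finset.card_le_univ e0
    rw [he0c] at h1
    simpa using h1
  rw [step1, step2]
  omega



/-- A linear 3-uniform hypergraph on `n` vertices with no induced copy of the linear 3-cycle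
`𝒲³` and no induced copy of the Fano hypergraph `F₇` has at most `n²/9` edges. -/
theorem induced_cycle_fano_free_bound (n : ℕ) (E : Finset (Finset (Fin n)))
    (hlin : Linear3 (E : Set (Finset (Fin n))))
    (hW : ¬ HasInducedCopy cycleHG (E : Set (Finset (Fin n))))
    (hF7 : ¬ HasInducedCopy fanoHG (E : Set (Finset (Fin n)))) :
    (E.card : ℝ) ≤ (n : ℝ) ^ 2 / 9 := by
  classical
  set deg : Fin n → ℕ := fun v => (E.filter (fun f => v ∈ f)).card with hdeg
  have hsum : ∑ v : Fin n, deg v = 3 * E.card := by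
    have h1 : ∀ v : Fin n, deg v = ∑ f ∈ E, if v ∈ f then 1 else 0 := by
      intro v; rw [hdeg]; exact Finset.card_filter _ _
    calc ∑ v : Fin n, deg v = ∑ v : Fin n, ∑ f ∈ E, if v ∈ f then 1 else 0 :=
          Finset.sum_congr rfl fun v _ => h1 v
      _ = ∑ f ∈ E, ∑ v : Fin n, if v ∈ f then 1 else 0 := Finset.sum_comm
      _ = ∑ f ∈ E, f.card := by
          refine Finset.sum_congr rfl fun f hf => ?_
          rw [← Finset.card_filter, Finset.filter_mem_eq_inter, Finset.univ_inter]
      _ = ∑ f ∈ E, 3 := Finset.sum_congr rfl fun f hf => hlin.1 f (Finset.mem_coe.mpr hf)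
      _ = 3 * E.card := by rw [Finset.sum_const, smul_eq_mul, mul_comm]
  have hsq : ∑ v : Fin n, deg v * deg v ≤ E.card * n := by
    have h2 : ∑ f ∈ E, ∑ v ∈ f, deg v = ∑ v : Fin n, deg v * deg v := by
      calc ∑ f ∈ E, ∑ v ∈ f, deg v
          = ∑ f ∈ E, ∑ v : Fin n, if v ∈ f then deg v else 0 := by
            refine Finset.sum_congr rfl fun f hf => ?_
            rw [Finset.sum_ite_mem, Finset.univ_inter]
        _ = ∑ v : Fin n, ∑ f ∈ E, if v ∈ f then deg v else 0 := Finset.sum_comm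
        _ = ∑ v : Fin n, deg v * deg v := by
            refine Finset.sum_congr rfl fun v _ => ?_
            rw [← Finset.sum_filter, Finset.sum_const, smul_eq_mul, hdeg]
    rw [← h2]
    calc ∑ f ∈ E, ∑ v ∈ f, deg v ≤ ∑ f ∈ E, n :=
          Finset.sum_le_sum fun f hf => key_deg n E hlin hW hF7 f hf
      _ = E.card * n := by rw [Finset.sum_const, smul_eq_mul]
  -- Cauchy-Schwarz over ℝ
  have hcs : ((3 * E.card : ℕ) : ℝ) ^ 2 ≤ (n : ℝ) * ((E.card * n : ℕ) : ℝ) := by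
    have h3 : (∑ v : Fin n, (deg v : ℝ)) ^ 2
        ≤ (Finset.univ : Finset (Fin n)).card * ∑ v : Fin n, (deg v : ℝ) ^ 2 :=
      sq_sum_le_card_mul_sum_sq
    have h4 : (∑ v : Fin n, (deg v : ℝ)) = ((3 * E.card : ℕ) : ℝ) := by
      rw [← hsum]; push_cast; rfl
    have h5 : ∑ v : Fin n, (deg v : ℝ) ^ 2 ≤ ((E.card * n : ℕ) : ℝ) := by
      have : (((∑ v : Fin n, deg v * deg v : ℕ)) : ℝ) ≤ ((E.card * n : ℕ) : ℝ) := by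
        exact_mod_cast hsq
      refine le_trans (le_of_eq ?_) this
      push_cast
      exact Finset.sum_congr rfl fun v _ => (sq (deg v : ℝ)) ▸ (sq (deg v : ℝ)).symm ▸ rfl
    calc ((3 * E.card : ℕ) : ℝ) ^ 2 = (∑ v : Fin n, (deg v : ℝ)) ^ 2 := by rw [h4]
      _ ≤ (Finset.univ : Finset (Fin n)).card * ∑ v : Fin n, (deg v : ℝ) ^ 2 := h3
      _ ≤ (n : ℝ) * ((E.card * n : ℕ) : ℝ) := by
          rw [Finset.card_univ, Fintype.card_fin]
          exact mul_le_mul_of_nonneg_left h5 (by positivity)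
  have hfin : 9 * (E.card : ℝ) ^ 2 ≤ (n : ℝ) ^ 2 * (E.card : ℝ) := by
    push_cast at hcs
    nlinarith [hcs]
  rcases Nat.eq_zero_or_pos E.card with h0 | hpos
  · rw [h0]; simp only [Nat.cast_zero]; positivity
  · have hEpos : (0 : ℝ) < E.card := by exact_mod_cast hpos
    rw [le_div_iff₀ (by norm_num : (0:ℝ) < 9)]
    nlinarith [hfin, hEpos]

end Paper
end
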